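/- Let A_C(Λ) be a non-degenerate code algebra, α, β ∈ C* with β ≠ α, αᶜ, and suppose a := a_{i,γ} is independent of i and γ. Let e_α = λt_α + μ_αe^α and e_β = λt_β + μ_βe^β be small idempotents with μ_α, μ_β ≠ 0. Then e_α·e_β = λ²t_{α∩β} + λa|α∩β|(μ_αe^α + μ_βe^β) + μ_αμ_βb_{α,β}e^{α+β}, where t_{α∩β} = Σ_{i∈supp(α)∩supp(β)} tᵢ. In particular, since b_{α,β} ≠ 0, the subalgebra generated by e_α and e_β has dimension strictly greater than 2. -/

import Mathlib

open Finset in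
/-- The code algebra `A_C(Λ)` of a binary linear code `C`, presented as a commutative
nonassociative `F`-algebra `A` with a distinguished basis of toral elements `t i` and
codeword elements `e α` (for `α ∈ C* = C \ {0, 1}`), structure parameters
`pa i α = a_{i,α}`, `pb α β = b_{α,β}`, `pc i α = c_{i,α}`, and the defining
multiplication rules. -/
structure CodeAlgebra (F : Type*) [Field F] (ι : Type*) [Fintype ι] [DecidableEq ι]
    (C : Submodule (ZMod 2) (ι → ZMod 2))
    (A : Type*) [NonUnitalNonAssocCommRing A] [Module F A] where
  t : ι → A
  e : (ι → ZMod 2) → A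
  pa : ι → (ι → ZMod 2) → F
  pb : (ι → ZMod 2) → (ι → ZMod 2) → F
  pc : ι → (ι → ZMod 2) → F
  indep : LinearIndependent F
    (Sum.elim t (fun β : {β : ι → ZMod 2 // β ∈ C ∧ β ≠ 0 ∧ β ≠ 1} => e β.1))
  span_top : Submodule.span F
    (Set.range t ∪ e '' {β | β ∈ C ∧ β ≠ 0 ∧ β ≠ 1}) = ⊤
  mul_tt : ∀ i j, t i * t j = if i = j then t i else 0
  mul_te : ∀ i α, α ∈ C → α ≠ 0 → α ≠ 1 →
    t i * e α = if α i = 1 then pa i α • e α else 0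
  mul_ee : ∀ α β, α ∈ C → β ∈ C → α ≠ 0 → α ≠ 1 → β ≠ 0 → β ≠ 1 →
    β ≠ α → α + β ≠ 1 → e α * e β = pb α β • e (α + β)
  mul_ee_self : ∀ α, α ∈ C → α ≠ 0 → α ≠ 1 →
    e α * e α = ∑ i ∈ univ.filter (fun i => α i = 1), pc i α • t i
  mul_ee_compl : ∀ α β, α ∈ C → β ∈ C → α ≠ 0 → α ≠ 1 → β ≠ 0 → β ≠ 1 →
    α + β = 1 → e α * e β = 0

/-! Expanding the product with the multiplication rules gives the formula. For the dimension
bound, read off the coordinates of `e_α`, `e_β` and `e_α e_β` at the basis vectors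
`e^α`, `e^β`, `e^{α+β}`: they form a triangular matrix with diagonal `μ_α, μ_β, μ_α μ_β b_{α,β}`,
so these three elements of the subalgebra are linearly independent. -/

theorem linearIndependent_fin_three_of_triangular {K M : Type*} [CommRing K] [NoZeroDivisors K]
    [AddCommGroup M] [Module K M] (f₀ f₁ f₂ : M →ₗ[K] K) {x y z : M}
    (hx : f₀ x ≠ 0) (hy : f₁ y ≠ 0) (hz : f₂ z ≠ 0)
    (hx₁ : f₁ x = 0) (hx₂ : f₂ x = 0) (hy₂ : f₂ y = 0) :
    LinearIndependent K ![x, y, z] := by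
  rw [Fintype.linearIndependent_iff]
  intro g hg
  simp only [Fin.sum_univ_three, Matrix.cons_val_zero, Matrix.cons_val_one,
    Matrix.cons_val_two, Matrix.head_cons, Matrix.tail_cons] at hg
  have h₂ : g 2 = 0 := by simpa [hx₂, hy₂, hz] using congrArg f₂ hg
  have h₁ : g 1 = 0 := by simpa [hx₁, h₂, hy] using congrArg f₁ hg
  have h₀ : g 0 = 0 := by simpa [h₁, h₂, hx] using congrArg f₀ hg
  intro i
  fin_cases i <;> assumption

theorem NonUnitalAlgebra.two_lt_rank_adjoin_pair {K A : Type*} [Field K]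
    [NonUnitalNonAssocSemiring A] [Module K A] [IsScalarTower K A A] [SMulCommClass K A A]
    {x y : A} (h : LinearIndependent K ![x, y, x * y]) :
    2 < Module.rank K (NonUnitalAlgebra.adjoin K ({x, y} : Set A)) := by
  have hx : x ∈ NonUnitalAlgebra.adjoin K ({x, y} : Set A) :=
    NonUnitalAlgebra.subset_adjoin K (Set.mem_insert _ _)
  have hy : y ∈ NonUnitalAlgebra.adjoin K ({x, y} : Set A) :=
    NonUnitalAlgebra.subset_adjoin K (Set.mem_insert_of_mem _ rfl)
  have hle : Submodule.span K (Set.range ![x, y, x * y]) ≤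
      (NonUnitalAlgebra.adjoin K ({x, y} : Set A)).toSubmodule := by
    rw [Submodule.span_le, Set.range_subset_iff]
    intro i
    fin_cases i
    exacts [hx, hy, (mul_mem hx hy : x * y ∈ NonUnitalAlgebra.adjoin K ({x, y} : Set A))]
  have hcard := Cardinal.mk_range_eq_of_injective h.injective
  rw [Cardinal.lift_uzero] at hcard
  calc (2 : Cardinal) < 3 := by norm_num
    _ = Module.rank K (Submodule.span K (Set.range ![x, y, x * y])) := by
      rw [rank_span h, hcard]; simp
    _ ≤ _ := Submodule.rank_mono hle

namespace CodeAlgebra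

open Finset

variable {F ι A : Type*} [Field F] [Fintype ι] [DecidableEq ι]
  {C : Submodule (ZMod 2) (ι → ZMod 2)} [NonUnitalNonAssocCommRing A] [Module F A]
  (CA : CodeAlgebra F ι C A)

theorem sum_t_mul_sum_t (s s' : Finset ι) :
    (∑ i ∈ s, CA.t i) * (∑ i ∈ s', CA.t i) = ∑ i ∈ s ∩ s', CA.t i := by
  simp_rw [sum_mul_sum, CA.mul_tt, sum_ite_eq, ← sum_filter, filter_mem_eq_inter]

theorem sum_t_mul_e (s : Finset ι) {γ : ι → ZMod 2} (hγC : γ ∈ C) (hγ0 : γ ≠ 0) (hγ1 : γ ≠ 1) :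
    (∑ i ∈ s, CA.t i) * CA.e γ = (∑ i ∈ s with γ i = 1, CA.pa i γ) • CA.e γ := by
  simp_rw [sum_mul, CA.mul_te _ γ hγC hγ0 hγ1, sum_filter, sum_smul, ite_smul, zero_smul]

noncomputable def basis : Module.Basis (ι ⊕ {γ : ι → ZMod 2 // γ ∈ C ∧ γ ≠ 0 ∧ γ ≠ 1}) F A :=
  Module.Basis.mk CA.indep <| by
    rw [← CA.span_top, Set.Sum.elim_range]
    congr!
    ext x
    simp

theorem basis_inl (i : ι) : CA.basis (Sum.inl i) = CA.t i :=
  Module.Basis.mk_apply _ _ _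

theorem basis_inr (γ : {γ : ι → ZMod 2 // γ ∈ C ∧ γ ≠ 0 ∧ γ ≠ 1}) :
    CA.basis (Sum.inr γ) = CA.e γ :=
  Module.Basis.mk_apply _ _ _

theorem coord_inr_sum_t (γ : {γ : ι → ZMod 2 // γ ∈ C ∧ γ ≠ 0 ∧ γ ≠ 1}) (s : Finset ι) :
    CA.basis.coord (Sum.inr γ) (∑ i ∈ s, CA.t i) = 0 := by
  simp [← basis_inl]

theorem coord_inr_e (γ : {γ : ι → ZMod 2 // γ ∈ C ∧ γ ≠ 0 ∧ γ ≠ 1}) {δ : ι → ZMod 2}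
    (hδC : δ ∈ C) (hδ0 : δ ≠ 0) (hδ1 : δ ≠ 1) :
    CA.basis.coord (Sum.inr γ) (CA.e δ) = if δ = γ.1 then 1 else 0 := by
  rw [← CA.basis_inr ⟨δ, hδC, hδ0, hδ1⟩]
  simp [Finsupp.single_apply, Subtype.ext_iff]

variable [SMulCommClass F A A] [IsScalarTower F A A] {α β : ι → ZMod 2}

theorem mul_toral_add_codeword (hαC : α ∈ C) (hα0 : α ≠ 0) (hα1 : α ≠ 1)
    (hβC : β ∈ C) (hβ0 : β ≠ 0) (hβ1 : β ≠ 1) (hne : β ≠ α) (hnc : α + β ≠ 1)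
    (lam lam' mua mub : F) :
    (lam • (∑ i with α i = 1, CA.t i) + mua • CA.e α) *
      (lam' • (∑ i with β i = 1, CA.t i) + mub • CA.e β) =
      (lam * lam') • (∑ i with α i = 1 ∧ β i = 1, CA.t i) +
      (lam' * mua * ∑ i with α i = 1 ∧ β i = 1, CA.pa i α) • CA.e α +
      (lam * mub * ∑ i with α i = 1 ∧ β i = 1, CA.pa i β) • CA.e β +
      (mua * mub * CA.pb α β) • CA.e (α + β) := by
  have hte : (∑ i with α i = 1, CA.t i) * CA.e β =
      (∑ i with α i = 1 ∧ β i = 1, CA.pa i β) • CA.e β := by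
    rw [CA.sum_t_mul_e _ hβC hβ0 hβ1, filter_filter]
  have het : CA.e α * (∑ i with β i = 1, CA.t i) =
      (∑ i with α i = 1 ∧ β i = 1, CA.pa i α) • CA.e α := by
    rw [mul_comm, CA.sum_t_mul_e _ hαC hα0 hα1, filter_filter]
    simp_rw [and_comm]
  simp only [add_mul, mul_add, smul_mul_assoc, mul_smul_comm, CA.sum_t_mul_sum_t, ← filter_and,
    hte, het, CA.mul_ee α β hαC hβC hα0 hα1 hβ0 hβ1 hne hnc]
  module

theorem mul_toral_add_codeword_of_pa_eq (hαC : α ∈ C) (hα0 : α ≠ 0) (hα1 : α ≠ 1)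
    (hβC : β ∈ C) (hβ0 : β ≠ 0) (hβ1 : β ≠ 1) (hne : β ≠ α) (hnc : α + β ≠ 1) {a : F}
    (haα : ∀ i, α i = 1 → CA.pa i α = a) (haβ : ∀ i, β i = 1 → CA.pa i β = a) (lam mua mub : F) :
    (lam • (∑ i with α i = 1, CA.t i) + mua • CA.e α) *
      (lam • (∑ i with β i = 1, CA.t i) + mub • CA.e β) =
      (lam ^ 2) • (∑ i with α i = 1 ∧ β i = 1, CA.t i) +
      (lam * a * (#{i | α i = 1 ∧ β i = 1} : F)) • (mua • CA.e α + mub • CA.e β) +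
      (mua * mub * CA.pb α β) • CA.e (α + β) := by
  have hα : ∑ i with α i = 1 ∧ β i = 1, CA.pa i α = #{i | α i = 1 ∧ β i = 1} • a :=
    sum_eq_card_nsmul fun i hi => haα i (mem_filter.1 hi).2.1
  have hβ : ∑ i with α i = 1 ∧ β i = 1, CA.pa i β = #{i | α i = 1 ∧ β i = 1} • a :=
    sum_eq_card_nsmul fun i hi => haβ i (mem_filter.1 hi).2.2
  rw [CA.mul_toral_add_codeword hαC hα0 hα1 hβC hβ0 hβ1 hne hnc, hα, hβ, nsmul_eq_mul]
  module

theorem linearIndependent_toral_add_codeword_mul (hαC : α ∈ C) (hα0 : α ≠ 0) (hα1 : α ≠ 1)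
    (hβC : β ∈ C) (hβ0 : β ≠ 0) (hβ1 : β ≠ 1) (hne : β ≠ α) (hnc : α + β ≠ 1)
    {lam lam' mua mub : F}
    (hmua : mua ≠ 0) (hmub : mub ≠ 0) (hb : CA.pb α β ≠ 0) :
    LinearIndependent F
      ![lam • (∑ i with α i = 1, CA.t i) + mua • CA.e α,
        lam' • (∑ i with β i = 1, CA.t i) + mub • CA.e β,
        (lam • (∑ i with α i = 1, CA.t i) + mua • CA.e α) *
          (lam' • (∑ i with β i = 1, CA.t i) + mub • CA.e β)] := by
  have habC : α + β ∈ C := add_mem hαC hβC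
  have hab0 : α + β ≠ 0 := by
    intro h
    apply hne
    rw [← neg_eq_of_add_eq_zero_right h]
    funext i
    exact ZMod.neg_eq_self_mod_two (α i)
  rw [CA.mul_toral_add_codeword hαC hα0 hα1 hβC hβ0 hβ1 hne hnc]
  refine linearIndependent_fin_three_of_triangular (CA.basis.coord (.inr ⟨α, hαC, hα0, hα1⟩))
    (CA.basis.coord (.inr ⟨β, hβC, hβ0, hβ1⟩)) (CA.basis.coord (.inr ⟨α + β, habC, hab0, hnc⟩))
    ?_ ?_ ?_ ?_ ?_ ?_ <;>
  simp only [map_add, map_smul, CA.coord_inr_sum_t, CA.coord_inr_e _ hαC hα0 hα1,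
    CA.coord_inr_e _ hβC hβ0 hβ1, CA.coord_inr_e _ habC hab0 hnc] <;>
  simp [hne.symm, hα0, hβ0, hmua, hmub, hb]

end CodeAlgebra

open Finset in
theorem small_idempotents_distinct_product_general
    (F : Type*) [Field F]
    (ι : Type*) [Fintype ι] [DecidableEq ι]
    (C : Submodule (ZMod 2) (ι → ZMod 2))
    (A : Type*) [NonUnitalNonAssocCommRing A] [Module F A]
    [SMulCommClass F A A] [IsScalarTower F A A]
    (CA : CodeAlgebra F ι C A)
    (α β : ι → ZMod 2) (hαC : α ∈ C) (hα0 : α ≠ 0) (hα1 : α ≠ 1)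
    (hβC : β ∈ C) (hβ0 : β ≠ 0) (hβ1 : β ≠ 1)
    (hne : β ≠ α) (hnc : α + β ≠ 1)
    (a0 lam mua mub : F)
    (ha : ∀ i γ, γ ∈ C → γ ≠ 0 → γ ≠ 1 → γ i = 1 → CA.pa i γ = a0)
    (hb : CA.pb α β ≠ 0) (hmua : mua ≠ 0) (hmub : mub ≠ 0) :
    (lam • (∑ i ∈ univ.filter fun i => α i = 1, CA.t i) + mua • CA.e α) *
      (lam • (∑ i ∈ univ.filter fun i => β i = 1, CA.t i) + mub • CA.e β) =
      (lam ^ 2) • (∑ i ∈ univ.filter fun i => α i = 1 ∧ β i = 1, CA.t i) +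
      (lam * a0 * ((univ.filter fun i => α i = 1 ∧ β i = 1).card : F)) •
        (mua • CA.e α + mub • CA.e β) +
      (mua * mub * CA.pb α β) • CA.e (α + β) ∧
    2 < Module.rank F
      (NonUnitalAlgebra.adjoin F
        ({lam • (∑ i ∈ univ.filter fun i => α i = 1, CA.t i) + mua • CA.e α,
          lam • (∑ i ∈ univ.filter fun i => β i = 1, CA.t i) + mub • CA.e β} : Set A)) :=
  ⟨CA.mul_toral_add_codeword_of_pa_eq hαC hα0 hα1 hβC hβ0 hβ1 hne hnc
      (fun i => ha i α hαC hα0 hα1) (fun i => ha i β hβC hβ0 hβ1) lam mua mub,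
    NonUnitalAlgebra.two_lt_rank_adjoin_pair <|
      CA.linearIndependent_toral_add_codeword_mul hαC hα0 hα1 hβC hβ0 hβ1 hne hnc hmua hmub hb⟩

open Finset in
/-- The product of small idempotents attached to distinct non-complementary codewords
`α, β`: `e_α e_β = λ² t_{α∩β} + λa|α∩β|(μ_α e^α + μ_β e^β) + μ_α μ_β b_{α,β} e^{α+β}`;
in particular the subalgebra generated by `e_α` and `e_β` has dimension `> 2`. -/
theorem small_idempotents_distinct_product
    (F : Type*) [Field F] (hch : (2 : F) ≠ 0)
    (ι : Type*) [Fintype ι] [DecidableEq ι]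
    (C : Submodule (ZMod 2) (ι → ZMod 2))
    (A : Type*) [NonUnitalNonAssocCommRing A] [Module F A]
    [SMulCommClass F A A] [IsScalarTower F A A]
    (CA : CodeAlgebra F ι C A)
    (α β : ι → ZMod 2) (hαC : α ∈ C) (hα0 : α ≠ 0) (hα1 : α ≠ 1)
    (hβC : β ∈ C) (hβ0 : β ≠ 0) (hβ1 : β ≠ 1)
    (hne : β ≠ α) (hnc : α + β ≠ 1)
    (a0 lam mua mub : F)
    (ha : ∀ i γ, γ ∈ C → γ ≠ 0 → γ ≠ 1 → γ i = 1 → CA.pa i γ = a0)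
    (hwt : (univ.filter fun i => α i = 1).card = (univ.filter fun i => β i = 1).card)
    (hlam : lam = (2 * a0 * ((univ.filter fun i => α i = 1).card : F))⁻¹)
    (hb : CA.pb α β ≠ 0) (hmua : mua ≠ 0) (hmub : mub ≠ 0) :
    (lam • (∑ i ∈ univ.filter fun i => α i = 1, CA.t i) + mua • CA.e α) *
      (lam • (∑ i ∈ univ.filter fun i => β i = 1, CA.t i) + mub • CA.e β) =
      (lam ^ 2) • (∑ i ∈ univ.filter fun i => α i = 1 ∧ β i = 1, CA.t i) +
      (lam * a0 * ((univ.filter fun i => α i = 1 ∧ β i = 1).card : F)) •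
        (mua • CA.e α + mub • CA.e β) +
      (mua * mub * CA.pb α β) • CA.e (α + β) ∧
    2 < Module.rank F
      (NonUnitalAlgebra.adjoin F
        ({lam • (∑ i ∈ univ.filter fun i => α i = 1, CA.t i) + mua • CA.e α,
          lam • (∑ i ∈ univ.filter fun i => β i = 1, CA.t i) + mub • CA.e β} : Set A)) :=
  small_idempotents_distinct_product_general F ι C A CA α β hαC hα0 hα1 hβC hβ0 hβ1 hne hnc a0 lam
    mua mub ha hb hmua hmub
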